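/- Let G be a graph, B a PSD forcing set of G, F a relaxed chronology of PSD forces for B, x ∈ V(G), and Q the path bundle of F induced by x. Then the terminus of F|_Q (the set consisting of the last vertex of each path in Q) is a PSD forcing set of G, and a relaxed chronology of PSD forces for it is obtained by reversing the forces between vertices of Q and preserving all remaining forces of F. -/

import Mathlib

namespace ZF

variable {V : Type*} [Fintype V] [DecidableEq V]

/-- A valid standard zero forcing force within the vertex set `U`, given blue set `B`:
`u` is blue, `v` is its unique white neighbor in `U`. -/
def ZFValid (G : SimpleGraph V) (U B : Set V) (u v : V) : Prop :=
  u ∈ U ∧ v ∈ U ∧ u ∈ B ∧ v ∉ B ∧ G.Adj u v ∧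
    ∀ w ∈ U, G.Adj u w → w ∉ B → w = v

/-- `whiteConn G U B a b` : `a` and `b` are joined by a walk through white
(non-blue) vertices of `U` (possibly trivial). -/
def whiteConn (G : SimpleGraph V) (U B : Set V) : V → V → Prop :=
  Relation.ReflTransGen (fun a b => G.Adj a b ∧ a ∈ U ∧ b ∈ U ∧ a ∉ B ∧ b ∉ B)

/-- A valid PSD force within the vertex set `U`, given blue set `B`:
`u` is blue and `v` is the unique neighbor of `u` in the component of the
white subgraph containing `v`. -/
def PSDValid (G : SimpleGraph V) (U B : Set V) (u v : V) : Prop :=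
  u ∈ U ∧ v ∈ U ∧ u ∈ B ∧ v ∉ B ∧ G.Adj u v ∧
    ∀ w ∈ U, G.Adj u w → w ∉ B → whiteConn G U B v w → w = v

/-- One propagation step for a generic color change rule `valid`. -/
def step (valid : Set V → V → V → Prop) (B : Set V) : Set V :=
  B ∪ {v | ∃ u, valid B u v}

/-- Iterated propagation. -/
def iter (valid : Set V → V → V → Prop) (B : Set V) : ℕ → Set V :=
  fun k => (step valid)^[k] B

/-- `B ⊆ U` is a forcing set of the induced subgraph on `U` for the rule `valid`. -/
def IsForcingSet (valid : Set V → V → V → Prop) (U B : Set V) : Prop :=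
  B ⊆ U ∧ ∃ k, U ⊆ iter valid B k

/-- Propagation time of the set `B` for rule `valid` on the induced subgraph on `U`. -/
noncomputable def propTime (valid : Set V → V → V → Prop) (U B : Set V) : ℕ :=
  sInf {k | U ⊆ iter valid B k}

/-- Vertices blue after `k` time-steps of the family of forces `F`, starting from `B`. -/
def expand (B : Set V) (F : ℕ → Set (V × V)) : ℕ → Set V
  | 0 => B
  | k + 1 => expand B F k ∪ {v | ∃ u, (u, v) ∈ F (k + 1)}

/-- A relaxed chronology of forces (for the rule `valid`) for the forcing set `B`
on the induced subgraph on `U`, with completion time `K`: at each time-step an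
arbitrary subset of the currently valid forces is performed (no vertex being
forced twice in one step), and all of `U` is blue after step `K`. -/
structure RelaxedChron (valid : Set V → V → V → Prop) (U B : Set V)
    (K : ℕ) (F : ℕ → Set (V × V)) : Prop where
  subset : B ⊆ U
  init : F 0 = ∅
  bound : ∀ k, K < k → F k = ∅
  forcesValid : ∀ k < K, ∀ u v, (u, v) ∈ F (k + 1) → valid (expand B F k) u v
  uniqueForcer : ∀ k u₁ u₂ v, (u₁, v) ∈ F k → (u₂, v) ∈ F k → u₁ = u₂
  complete : U ⊆ expand B F K

/-- The underlying set of forces of a relaxed chronology. -/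
def forcesOf (F : ℕ → Set (V × V)) (K : ℕ) : Set (V × V) :=
  {p | ∃ k, 1 ≤ k ∧ k ≤ K ∧ p ∈ F k}

/-- The terminus of a relaxed chronology: the vertices (of `U`) performing no force. -/
def terminus (U : Set V) (F : ℕ → Set (V × V)) (K : ℕ) : Set V :=
  {v ∈ U | ∀ u, (v, u) ∉ forcesOf F K}

/-- The reversal of a relaxed chronology: each force is reversed and
the order of the time-steps is reversed. -/
def revChron (F : ℕ → Set (V × V)) (K : ℕ) : ℕ → Set (V × V) :=
  fun k => if 1 ≤ k ∧ k ≤ K then {p | (p.2, p.1) ∈ F (K - k + 1)} else ∅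

/-- One round of performing all currently valid forces from the set of forces `S`. -/
def forceStep (valid : Set V → V → V → Prop) (S : Set (V × V)) (B : Set V) : Set V :=
  B ∪ {v | ∃ u, (u, v) ∈ S ∧ valid B u v}

def forceIter (valid : Set V → V → V → Prop) (S : Set (V × V)) (B : Set V) : ℕ → Set V :=
  fun t => (forceStep valid S)^[t] B

/-- Propagation time of a set of forces `S` for starting set `B` on `U`. -/
noncomputable def ptForces (valid : Set V → V → V → Prop) (U : Set V)
    (S : Set (V × V)) (B : Set V) : ℕ :=
  sInf {t | U ⊆ forceIter valid S B t}

/-- `v` is active at time-step `k` of the relaxed chronology `F`: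
it is blue after step `k` and has not yet performed a force. -/
def activeAt (B : Set V) (F : ℕ → Set (V × V)) (v : V) (k : ℕ) : Prop :=
  v ∈ expand B F k ∧ ∀ j ≤ k, ∀ u, (v, u) ∉ F j

/-- The zero forcing number. -/
noncomputable def Z (G : SimpleGraph V) : ℕ :=
  sInf {n | ∃ B : Set V, B.ncard = n ∧ IsForcingSet (ZFValid G Set.univ) Set.univ B}

/-- The PSD forcing number. -/
noncomputable def Zplus (G : SimpleGraph V) : ℕ :=
  sInf {n | ∃ B : Set V, B.ncard = n ∧ IsForcingSet (PSDValid G Set.univ) Set.univ B}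

/-- Standard `m`-propagation time `pt(G,m)`. -/
noncomputable def ptm (G : SimpleGraph V) (m : ℕ) : ℕ :=
  sInf {t | ∃ B : Set V, B.ncard = m ∧ IsForcingSet (ZFValid G Set.univ) Set.univ B ∧
    propTime (ZFValid G Set.univ) Set.univ B = t}

/-- PSD `m`-propagation time `pt₊(G,m)`. -/
noncomputable def ptplusm (G : SimpleGraph V) (m : ℕ) : ℕ :=
  sInf {t | ∃ B : Set V, B.ncard = m ∧ IsForcingSet (PSDValid G Set.univ) Set.univ B ∧
    propTime (PSDValid G Set.univ) Set.univ B = t}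

/-- Standard propagation time `pt(G)`. -/
noncomputable def pt (G : SimpleGraph V) : ℕ := ptm G (Z G)

/-- PSD propagation time `pt₊(G)`. -/
noncomputable def ptplus (G : SimpleGraph V) : ℕ := ptplusm G (Zplus G)

/-- PSD throttling number `thr₊(G)`. -/
noncomputable def thrplus (G : SimpleGraph V) : ℕ :=
  sInf {t | ∃ B : Set V, IsForcingSet (PSDValid G Set.univ) Set.univ B ∧
    t = B.ncard + propTime (PSDValid G Set.univ) Set.univ B}

/-- Closed neighborhood of a set. -/
def closedNbhd (G : SimpleGraph V) (B : Set V) : Set V :=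
  B ∪ {v | ∃ u ∈ B, G.Adj u v}

/-- Power domination process: the first step colors the closed neighborhood,
subsequent steps apply the standard zero forcing rule. -/
def pdIter (G : SimpleGraph V) (B : Set V) : ℕ → Set V
  | 0 => B
  | 1 => closedNbhd G B
  | (k + 2) => step (ZFValid G Set.univ) (pdIter G B (k + 1))

/-- `B` is a power dominating set. -/
def IsPDSet (G : SimpleGraph V) (B : Set V) : Prop :=
  ∃ k, Set.univ ⊆ pdIter G B k

/-- Power propagation time of a set. -/
noncomputable def pdPropTime (G : SimpleGraph V) (B : Set V) : ℕ :=
  sInf {k | Set.univ ⊆ pdIter G B k}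

/-- Power `m`-propagation time `ppt(G,m)`. -/
noncomputable def pptm (G : SimpleGraph V) (m : ℕ) : ℕ :=
  sInf {t | ∃ B : Set V, B.ncard = m ∧ IsPDSet G B ∧ pdPropTime G B = t}

/-- Restriction of a family of forces to those with both endpoints in `W`. -/
def restrictF (F : ℕ → Set (V × V)) (W : Set V) : ℕ → Set (V × V) :=
  fun k => {p ∈ F k | p.1 ∈ W ∧ p.2 ∈ W}

/-- The forcing tree of `b` : all vertices reachable from `b` by a chain of forces in `S`. -/
def treeOf (S : Set (V × V)) (b : V) : Set V :=
  {w | Relation.ReflTransGen (fun a c => (a, c) ∈ S) b w}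

open Classical in
/-- The endpoint, after `k` steps, of the path grown from `b ∈ B` in the
path bundle of the relaxed chronology `F` induced by the vertex `x`: the path is
extended by a force from its current endpoint into the component of white
vertices containing `x`, whenever such a force occurs. -/
noncomputable def lastVert (G : SimpleGraph V) (B : Set V) (F : ℕ → Set (V × V))
    (x : V) (b : V) : ℕ → V
  | 0 => b
  | k + 1 =>
    if h : ∃ w, (lastVert G B F x b k, w) ∈ F (k + 1) ∧ x ∉ expand B F k ∧
        whiteConn G Set.univ (expand B F k) x w
    then h.choose else lastVert G B F x b k

/-- The vertex set of the path bundle of `F` induced by `x`. -/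
def bundle (G : SimpleGraph V) (B : Set V) (F : ℕ → Set (V × V)) (x : V) (K : ℕ) : Set V :=
  {v | ∃ b ∈ B, ∃ j ≤ K, lastVert G B F x b j = v}

/-- The path of the bundle grown from `b`, as a list of vertices. -/
noncomputable def bundlePath (G : SimpleGraph V) (B : Set V) (F : ℕ → Set (V × V))
    (x : V) (K : ℕ) (b : V) : List V :=
  ((List.range (K + 1)).map (lastVert G B F x b)).dedup

/-- A nonempty path in `G`, given as a list of distinct consecutively adjacent vertices. -/
def IsPathList (G : SimpleGraph V) (l : List V) : Prop :=
  l ≠ [] ∧ l.Nodup ∧ l.Chain' G.Adj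

/-- `P` is an `(α,β)`-linkage: a collection of pairwise vertex-disjoint paths,
`α` consisting of one endpoint of each path and `β` of the other endpoints. -/
def IsLinkage (G : SimpleGraph V) (α β : Set V) (P : Set (List V)) : Prop :=
  (∀ l ∈ P, IsPathList G l) ∧
  (∀ l ∈ P, ∀ l' ∈ P, l ≠ l' → ∀ v, v ∈ l → v ∉ l') ∧
  (∀ l ∈ P, ∀ l' ∈ P, l.head? = l'.head? → l = l') ∧
  (∀ l ∈ P, ∀ l' ∈ P, l.getLast? = l'.getLast? → l = l') ∧
  α = {v | ∃ l ∈ P, l.head? = some v} ∧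
  β = {v | ∃ l ∈ P, l.getLast? = some v}

/-- `P` is a rigid linkage: for some `α`, `β` it is the unique `(α,β)`-linkage in `G`. -/
def IsRigidLinkage (G : SimpleGraph V) (P : Set (List V)) : Prop :=
  ∃ α β, IsLinkage G α β P ∧ ∀ P', IsLinkage G α β P' → P' = P

/-- A path cover of `G` : `m` vertex-disjoint induced paths covering all vertices,
the `i`-th path having vertices `vtx i 0, …, vtx i (n i − 1)` in path order. -/
structure IsPathCover (G : SimpleGraph V) (m : ℕ) (n : Fin m → ℕ)
    (vtx : (i : Fin m) → Fin (n i) → V) : Prop where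
  pos : ∀ i, 0 < n i
  inj : Function.Injective (fun p : (i : Fin m) × Fin (n i) => vtx p.1 p.2)
  cover : ∀ v : V, ∃ i j, vtx i j = v
  induced : ∀ i (j j' : Fin (n i)),
    G.Adj (vtx i j) (vtx i j') ↔ ((j : ℕ) + 1 = (j' : ℕ) ∨ (j' : ℕ) + 1 = (j : ℕ))

/-- A witness that a path cover is a parallel increasing path cover: a collection of
block partitions of `{0,…,K}`, one per path, compatible with the edges of `G`. -/
structure IsPIPWitness (G : SimpleGraph V) (m : ℕ) (n : Fin m → ℕ)
    (vtx : (i : Fin m) → Fin (n i) → V) (K : ℕ)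
    (A : (i : Fin m) → Fin (n i) → Finset ℕ) : Prop where
  mem : ∀ i j, A i j ⊆ Finset.range (K + 1)
  nonempty : ∀ i j, (A i j).Nonempty
  partition : ∀ i, ∀ x ∈ Finset.range (K + 1), ∃! j, x ∈ A i j
  mono : ∀ i (j j' : Fin (n i)), (j : ℕ) < (j' : ℕ) → ∀ x ∈ A i j, ∀ y ∈ A i j', x < y
  edge : ∀ (i i' : Fin m) j j', i ≠ i' →
    G.Adj (vtx i j) (vtx i' j') → ((A i j) ∩ (A i' j')).Nonempty

/-- A parallel increasing path cover of `G`. -/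
def IsPIP (G : SimpleGraph V) (m : ℕ) (n : Fin m → ℕ)
    (vtx : (i : Fin m) → Fin (n i) → V) : Prop :=
  IsPathCover G m n vtx ∧ ∃ K A, IsPIPWitness G m n vtx K A

/-- The path cover given by `vtx` is the chain set of the family of forces `F` :
the underlying forces are exactly the consecutive pairs along the paths. -/
def IsChainSetOf (m : ℕ) (n : Fin m → ℕ) (vtx : (i : Fin m) → Fin (n i) → V)
    (F : ℕ → Set (V × V)) (K : ℕ) : Prop :=
  ∀ u w, (u, w) ∈ forcesOf F K ↔
    ∃ (i : Fin m) (j : Fin (n i)) (j' : Fin (n i)),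
      u = vtx i j ∧ w = vtx i j' ∧ (j : ℕ) + 1 = (j' : ℕ)

end ZF

/-!
The paths of the bundle are vertex-disjoint, and a force of `F` whose target lies on the bundle
is a step of one of its paths. Reversing the bundle forces from time `K` down to time `1`, the
blue set when the step at time `c + 1` is undone is the set of path vertices occupied at some
time `≥ c + 1`. The reversed force `q → p` of a path step `p → q` is then a valid PSD force: a
white neighbour `w ≠ p` of `q` joined to `p` by a white walk would have been white at time `c`
and in the white component of `x`, and so would every vertex of that walk (a vertex of the walk
blue at time `c` would have forced its predecessor at time `c + 1`, putting that predecessor on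
the bundle, yet every bundle vertex white at time `c` is occupied at some time `≥ c + 1`), so
`p` itself would have been white at time `c`. Once the whole bundle is blue, every blue set contains
the corresponding blue set of `F`, so the remaining forces of `F` can be replayed in order.
-/

namespace ZF

section WhiteConn

variable {V : Type*} {G : SimpleGraph V} {U : Set V}

theorem whiteConn_anti {B₁ B₂ : Set V} (h : B₁ ⊆ B₂) {a b : V}
    (hab : whiteConn G U B₂ a b) : whiteConn G U B₁ a b :=
  Relation.ReflTransGen.mono
    (fun _ _ ⟨hadj, hU, hU', ha, hb⟩ => ⟨hadj, hU, hU', fun h' => ha (h h'), fun h' => hb (h h')⟩)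
    _ _ hab

theorem whiteConn_symm {B₀ : Set V} {a b : V} (hab : whiteConn G U B₀ a b) :
    whiteConn G U B₀ b a := by
  induction hab with
  | refl => exact Relation.ReflTransGen.refl
  | tail _ h ih =>
    exact Relation.ReflTransGen.head ⟨h.1.symm, h.2.2.1, h.2.1, h.2.2.2.2, h.2.2.2.1⟩ ih

theorem whiteConn_tail {B₀ : Set V} {a b c : V} (hab : whiteConn G U B₀ a b) (hbc : G.Adj b c)
    (hb : b ∈ U \ B₀) (hc : c ∈ U \ B₀) : whiteConn G U B₀ a c :=
  Relation.ReflTransGen.tail hab ⟨hbc, hb.1, hc.1, hb.2, hc.2⟩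

theorem PSDValid.of_subset {B₁ B₂ : Set V} (h : B₁ ⊆ B₂) {u v : V}
    (huv : PSDValid G U B₁ u v) : v ∈ B₂ ∨ PSDValid G U B₂ u v := by
  obtain ⟨hu, hv, huB, -, hadj, huniq⟩ := huv
  by_cases hvB : v ∈ B₂
  · exact Or.inl hvB
  · exact Or.inr ⟨hu, hv, h huB, hvB, hadj, fun w hw hadj' hwB hvw =>
      huniq w hw hadj' (fun h' => hwB (h h')) (whiteConn_anti h hvw)⟩

end WhiteConn

section Expand

variable {V : Type*} {B : Set V} {F : ℕ → Set (V × V)}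

theorem expand_mono : Monotone (expand B F) :=
  monotone_nat_of_le_succ fun _ => Set.subset_union_left

theorem subset_expand (k : ℕ) : B ⊆ expand B F k := expand_mono k.zero_le

theorem mem_expand_succ_of_mem {u v : V} {k : ℕ} (h : (u, v) ∈ F (k + 1)) :
    v ∈ expand B F (k + 1) :=
  Or.inr ⟨u, h⟩

theorem exists_force_of_mem_expand {v : V} {r : ℕ} (hv : v ∈ expand B F r) (hvB : v ∉ B) :
    ∃ k < r, ∃ u, (u, v) ∈ F (k + 1) := by
  induction r with
  | zero => exact absurd hv hvB
  | succ r ih =>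
    rcases hv with hv | ⟨u, hu⟩
    · obtain ⟨k, hk, hu⟩ := ih hv
      exact ⟨k, by omega, hu⟩
    · exact ⟨r, r.lt_succ_self, u, hu⟩

end Expand

theorem RelaxedChron.isForcingSet {V : Type*} {valid : Set V → V → V → Prop}
    {U B : Set V} {K : ℕ} {F : ℕ → Set (V × V)} (hF : RelaxedChron valid U B K F)
    (hvalid : ∀ ⦃B₁ B₂ : Set V⦄, B₁ ⊆ B₂ → ∀ ⦃u v : V⦄, valid B₁ u v → v ∈ B₂ ∨ valid B₂ u v) :
    IsForcingSet valid U B := by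
  have hsub : ∀ t ≤ K, expand B F t ⊆ iter valid B t := by
    intro t ht
    induction t with
    | zero => exact subset_rfl
    | succ t ih =>
      rw [iter, Function.iterate_succ_apply']
      rintro v (hv | ⟨u, hu⟩)
      · exact Or.inl (ih (by omega) hv)
      · exact (hvalid (ih (by omega)) (hF.forcesValid t (by omega) u v hu)).imp_right
          fun h => ⟨u, h⟩
  exact ⟨hF.subset, K, hF.complete.trans (hsub K le_rfl)⟩

namespace RelaxedChron

section Forces

variable {V : Type*} {G : SimpleGraph V} {U B : Set V} {K : ℕ} {F : ℕ → Set (V × V)}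
  (hF : RelaxedChron (PSDValid G U) U B K F)
include hF

theorem lt_of_mem {p : V × V} {k : ℕ} (h : p ∈ F (k + 1)) : k < K := by
  by_contra hk
  rw [hF.bound (k + 1) (by omega)] at h
  exact h

theorem psdValid_of_mem {u v : V} {k : ℕ} (h : (u, v) ∈ F (k + 1)) :
    PSDValid G U (expand B F k) u v :=
  hF.forcesValid k (hF.lt_of_mem h) u v h

theorem source_mem_expand {u v : V} {k : ℕ} (h : (u, v) ∈ F (k + 1)) : u ∈ expand B F k :=
  (hF.psdValid_of_mem h).2.2.1

theorem target_notMem_expand {u v : V} {k : ℕ} (h : (u, v) ∈ F (k + 1)) : v ∉ expand B F k :=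
  (hF.psdValid_of_mem h).2.2.2.1

theorem adj_of_mem {u v : V} {k : ℕ} (h : (u, v) ∈ F (k + 1)) : G.Adj u v :=
  (hF.psdValid_of_mem h).2.2.2.2.1

theorem eq_of_adj_of_whiteConn {u v w : V} {k : ℕ} (h : (u, v) ∈ F (k + 1)) (hw : w ∈ U)
    (hadj : G.Adj u w) (hwk : w ∉ expand B F k) (hvw : whiteConn G U (expand B F k) v w) :
    w = v :=
  (hF.psdValid_of_mem h).2.2.2.2.2 w hw hadj hwk hvw

theorem eq_of_mem_of_mem {u u' v : V} {k k' : ℕ} (h : (u, v) ∈ F (k + 1))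
    (h' : (u', v) ∈ F (k' + 1)) : k = k' ∧ u = u' := by
  obtain rfl : k = k' := by
    by_contra hne
    rcases Nat.lt_or_gt_of_ne hne with hlt | hlt
    · exact hF.target_notMem_expand h' (expand_mono hlt (mem_expand_succ_of_mem h))
    · exact hF.target_notMem_expand h (expand_mono hlt (mem_expand_succ_of_mem h'))
  exact ⟨rfl, hF.uniqueForcer _ u u' v h h'⟩

end Forces

end RelaxedChron

section Bundle

variable {V : Type*} [Fintype V] {G : SimpleGraph V} {B : Set V} {F : ℕ → Set (V × V)} {x : V}

def bundleTail (G : SimpleGraph V) (B : Set V) (F : ℕ → Set (V × V)) (x : V) (K s : ℕ) :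
    Set V :=
  {v | ∃ b ∈ B, ∃ j, s ≤ j ∧ j ≤ K ∧ lastVert G B F x b j = v}

theorem bundleTail_zero (K : ℕ) : bundleTail G B F x K 0 = bundle G B F x K := by
  ext v
  simp [bundleTail, bundle]

theorem subset_bundle (K : ℕ) : B ⊆ bundle G B F x K := fun b hb => ⟨b, hb, 0, K.zero_le, rfl⟩

theorem lastVert_succ_of_exists {b : V} {k : ℕ}
    (h : ∃ w, (lastVert G B F x b k, w) ∈ F (k + 1) ∧ x ∉ expand B F k ∧
      whiteConn G Set.univ (expand B F k) x w) :
    (lastVert G B F x b k, lastVert G B F x b (k + 1)) ∈ F (k + 1) ∧ x ∉ expand B F k ∧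
      whiteConn G Set.univ (expand B F k) x (lastVert G B F x b (k + 1)) := by
  rw [lastVert, dif_pos h]
  exact h.choose_spec

theorem lastVert_succ_eq_or (b : V) (k : ℕ) :
    lastVert G B F x b (k + 1) = lastVert G B F x b k ∨
      (lastVert G B F x b k, lastVert G B F x b (k + 1)) ∈ F (k + 1) ∧ x ∉ expand B F k ∧
        whiteConn G Set.univ (expand B F k) x (lastVert G B F x b (k + 1)) := by
  by_cases h : ∃ w, (lastVert G B F x b k, w) ∈ F (k + 1) ∧ x ∉ expand B F k ∧
      whiteConn G Set.univ (expand B F k) x w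
  · exact Or.inr (lastVert_succ_of_exists h)
  · left
    rw [lastVert, dif_neg h]

theorem lastVert_eq_or_exists_force (b : V) (j : ℕ) :
    lastVert G B F x b j = b ∨ ∃ i < j,
      (lastVert G B F x b i, lastVert G B F x b j) ∈ F (i + 1) ∧
        lastVert G B F x b (i + 1) = lastVert G B F x b j := by
  induction j with
  | zero => exact Or.inl rfl
  | succ j ih =>
    rcases lastVert_succ_eq_or b j with h | h
    · rw [h]
      exact ih.imp_right fun ⟨i, hi, hforce, he⟩ => ⟨i, by omega, hforce, he⟩
    · exact Or.inr ⟨j, j.lt_succ_self, h.1, rfl⟩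

theorem exists_lastVert_eq_succ_ne {b z : V} {i c : ℕ} (hic : i ≤ c)
    (hi : lastVert G B F x b i = z) (hc : lastVert G B F x b c ≠ z) :
    ∃ j < c, lastVert G B F x b j = z ∧ lastVert G B F x b (j + 1) ≠ z := by
  induction c with
  | zero => exact absurd (by rwa [Nat.le_zero.mp hic] at hi) hc
  | succ c ih =>
    by_cases hcz : lastVert G B F x b c = z
    · exact ⟨c, c.lt_succ_self, hcz, hc⟩
    · have hic' : i ≤ c := Nat.lt_succ_iff.mp (lt_of_le_of_ne hic fun h => hc (by rwa [h] at hi))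
      obtain ⟨j, hj, hjz⟩ := ih hic' hcz
      exact ⟨j, by omega, hjz⟩

theorem lastVert_mem_expand {b : V} (hb : b ∈ B) (k : ℕ) :
    lastVert G B F x b k ∈ expand B F k := by
  induction k with
  | zero => exact hb
  | succ k ih =>
    rcases lastVert_succ_eq_or b k with h | h
    · rw [h]
      exact expand_mono k.le_succ ih
    · exact mem_expand_succ_of_mem h.1

theorem mem_bundleTail_of_notMem_expand {K : ℕ} {v : V} (hv : v ∈ bundle G B F x K) {c : ℕ}
    (hvc : v ∉ expand B F c) : v ∈ bundleTail G B F x K (c + 1) := by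
  obtain ⟨b, hb, j, hjK, rfl⟩ := hv
  refine ⟨b, hb, j, ?_, hjK, rfl⟩
  by_contra hjc
  exact hvc (expand_mono (by omega) (lastVert_mem_expand hb j))

end Bundle

namespace RelaxedChron

section Bundle

variable {V : Type*} [Fintype V] {G : SimpleGraph V} {B : Set V} {K : ℕ}
  {F : ℕ → Set (V × V)} {x : V} (hF : RelaxedChron (PSDValid G Set.univ) Set.univ B K F)
include hF

theorem lastVert_ne_of_succ_ne {b : V} (hb : b ∈ B) {i : ℕ}
    (hi : lastVert G B F x b (i + 1) ≠ lastVert G B F x b i) {j : ℕ} (hij : i < j) :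
    lastVert G B F x b j ≠ lastVert G B F x b i := by
  induction j, (hij : i + 1 ≤ j) using Nat.le_induction with
  | base => exact hi
  | succ j hij ih =>
    rcases lastVert_succ_eq_or b j with h | h
    · rwa [h]
    · intro heq
      exact hF.target_notMem_expand h.1
        (by rw [heq]; exact expand_mono (by omega) (lastVert_mem_expand hb i))

theorem eq_of_lastVert_eq {b b' : V} (hb : b ∈ B) (hb' : b' ∈ B) {j j' : ℕ}
    (h : lastVert G B F x b j = lastVert G B F x b' j') : b = b' := by
  induction j using Nat.strong_induction_on generalizing b b' j' with
  | _ j ih =>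
  rcases lastVert_eq_or_exists_force b j with h₀ | ⟨i, hij, hi, -⟩ <;>
    rcases lastVert_eq_or_exists_force b' j' with h₀' | ⟨i', -, hi', -⟩
  · exact h₀.symm.trans (h.trans h₀')
  · exact absurd (subset_expand i' hb) (by rw [← h₀, h]; exact hF.target_notMem_expand hi')
  · exact absurd (subset_expand i hb') (by rw [← h₀', ← h]; exact hF.target_notMem_expand hi)
  · rw [h] at hi
    obtain ⟨rfl, hu⟩ := hF.eq_of_mem_of_mem hi hi'
    exact ih i hij hb hb' hu

theorem exists_le_lastVert_eq_of_mem_expand {b : V} {j c : ℕ}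
    (hc : lastVert G B F x b j ∈ expand B F c) :
    ∃ i ≤ c, lastVert G B F x b i = lastVert G B F x b j := by
  rcases lastVert_eq_or_exists_force b j with h₀ | ⟨i, -, hi, he⟩
  · exact ⟨0, c.zero_le, h₀.symm⟩
  · refine ⟨i + 1, ?_, he⟩
    by_contra hlt
    exact hF.target_notMem_expand hi (expand_mono (by omega) hc)

theorem exists_lastVert_of_mem_bundle {u v : V} {k : ℕ} (h : (u, v) ∈ F (k + 1))
    (hv : v ∈ bundle G B F x K) :
    ∃ b ∈ B, lastVert G B F x b k = u ∧ lastVert G B F x b (k + 1) = v := by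
  obtain ⟨b, hb, j, -, rfl⟩ := hv
  rcases lastVert_eq_or_exists_force b j with h₀ | ⟨i, -, hi, he⟩
  · exact absurd (subset_expand k (by rwa [h₀])) (hF.target_notMem_expand h)
  · obtain ⟨rfl, rfl⟩ := hF.eq_of_mem_of_mem hi h
    exact ⟨b, hb, rfl, he⟩

theorem eq_lastVert_succ_of_adj {b z : V} {j : ℕ}
    (hmove : lastVert G B F x b (j + 1) ≠ lastVert G B F x b j)
    (hadj : G.Adj (lastVert G B F x b j) z) (hz : z ∉ expand B F j)
    (hxz : whiteConn G Set.univ (expand B F j) x z) : z = lastVert G B F x b (j + 1) := by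
  obtain ⟨hforce, -, hxq⟩ := (lastVert_succ_eq_or b j).resolve_left hmove
  exact hF.eq_of_adj_of_whiteConn hforce trivial hadj hz
    (Relation.ReflTransGen.trans (whiteConn_symm hxq) hxz)

/-- The last move of the path away from `z` went to the unique neighbour of `z` in the white
component of `x`, which must be `y`; as `y` is still white at time `c`, that move is the force
at time `c + 1`. -/
theorem force_of_adj_of_lastVert_ne {b z y : V} {i c : ℕ} (hic : i ≤ c + 1)
    (hi : lastVert G B F x b i = z) (hc : lastVert G B F x b (c + 1) ≠ z) (hadj : G.Adj z y)
    (hy : y ∉ expand B F c) (hxy : whiteConn G Set.univ (expand B F c) x y) :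
    (z, y) ∈ F (c + 1) := by
  obtain ⟨j, hj, rfl, hne⟩ := exists_lastVert_eq_succ_ne hic hi hc
  have hyj := hF.eq_lastVert_succ_of_adj hne hadj (fun h => hy (expand_mono (by omega) h))
    (whiteConn_anti (expand_mono (by omega)) hxy)
  have hforce := ((lastVert_succ_eq_or b j).resolve_left hne).1
  rw [← hyj] at hforce
  obtain rfl : j = c := by
    by_contra hjc
    exact hy (expand_mono (by omega) (mem_expand_succ_of_mem hforce))
  exact hforce

theorem mem_bundle_of_whiteConn {u v : V} {k : ℕ} (h : (u, v) ∈ F (k + 1))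
    (hx : x ∉ expand B F k) (hxv : whiteConn G Set.univ (expand B F k) x v) :
    v ∈ bundle G B F x K := by
  induction k using Nat.strong_induction_on generalizing u v with
  | _ k ih =>
  by_cases hcur : ∃ b ∈ B, lastVert G B F x b k = u
  · obtain ⟨b, hb, rfl⟩ := hcur
    obtain ⟨hforce, -, hxw⟩ := lastVert_succ_of_exists ⟨v, h, hx, hxv⟩
    rw [hF.eq_of_adj_of_whiteConn hforce trivial (hF.adj_of_mem h) (hF.target_notMem_expand h)
      (Relation.ReflTransGen.trans (whiteConn_symm hxw) hxv)]
    exact ⟨b, hb, k + 1, hF.lt_of_mem h, rfl⟩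
  by_cases hu : u ∈ bundle G B F x K
  · -- `u` was on a path but the path has moved on: that move already forced `v`.
    exfalso
    obtain ⟨b, hb, j, -, rfl⟩ := hu
    obtain ⟨i, hik, hi⟩ := hF.exists_le_lastVert_eq_of_mem_expand (hF.source_mem_expand h)
    have hne : lastVert G B F x b k ≠ lastVert G B F x b j := fun he => hcur ⟨b, hb, he⟩
    cases k with
    | zero => exact hne (by rw [← hi, Nat.le_zero.mp hik])
    | succ c =>
      exact hF.target_notMem_expand h (mem_expand_succ_of_mem
        (hF.force_of_adj_of_lastVert_ne hik hi hne (hF.adj_of_mem h)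
          (fun h' => hF.target_notMem_expand h (expand_mono c.le_succ h'))
          (whiteConn_anti (expand_mono c.le_succ) hxv)))
  · -- `u` was itself forced earlier, inside the white component of `x`.
    exfalso
    obtain ⟨t, htk, u', hu'⟩ :=
      exists_force_of_mem_expand (hF.source_mem_expand h) fun huB => hu (subset_bundle K huB)
    exact hu (ih t htk hu' (fun h' => hx (expand_mono htk.le h'))
      (whiteConn_tail (whiteConn_anti (expand_mono htk.le) hxv) (hF.adj_of_mem h).symm
        ⟨trivial, fun h' => hF.target_notMem_expand h (expand_mono htk.le h')⟩
        ⟨trivial, hF.target_notMem_expand hu'⟩))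

theorem force_of_adj_of_notMem_bundleTail {c : ℕ} (hc : c < K) (hx : x ∉ expand B F c)
    {z y : V} (hz : z ∈ expand B F c) (hzT : z ∉ bundleTail G B F x K (c + 1))
    (hadj : G.Adj z y) (hy : y ∉ expand B F c)
    (hxy : whiteConn G Set.univ (expand B F c) x y) : (z, y) ∈ F (c + 1) := by
  by_cases hzQ : z ∈ bundle G B F x K
  · obtain ⟨b, hb, j, -, rfl⟩ := hzQ
    obtain ⟨i, hic, hi⟩ := hF.exists_le_lastVert_eq_of_mem_expand hz
    exact hF.force_of_adj_of_lastVert_ne (by omega) hi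
      (fun he => hzT ⟨b, hb, c + 1, le_rfl, hc, he⟩) hadj hy hxy
  · exfalso
    obtain ⟨t, htc, u, hu⟩ := exists_force_of_mem_expand hz fun hzB => hzQ (subset_bundle K hzB)
    exact hzQ (hF.mem_bundle_of_whiteConn hu (fun h => hx (expand_mono htc.le h))
      (whiteConn_tail (whiteConn_anti (expand_mono htc.le) hxy) hadj.symm
        ⟨trivial, fun h => hy (expand_mono htc.le h)⟩ ⟨trivial, hF.target_notMem_expand hu⟩))

theorem notMem_expand_of_adj {c : ℕ} (hc : c < K) (hx : x ∉ expand B F c) {y z : V}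
    (hyT : y ∉ bundleTail G B F x K (c + 1)) (hy : y ∉ expand B F c)
    (hxy : whiteConn G Set.univ (expand B F c) x y) (hadj : G.Adj y z)
    (hzT : z ∉ bundleTail G B F x K (c + 1)) : z ∉ expand B F c := fun hz =>
  hyT (mem_bundleTail_of_notMem_expand (hF.mem_bundle_of_whiteConn
    (hF.force_of_adj_of_notMem_bundleTail hc hx hz hzT hadj.symm hy hxy) hx hxy) hy)

theorem lastVert_notMem_bundleTail {b : V} (hb : b ∈ B) {c : ℕ}
    (hmove : lastVert G B F x b (c + 1) ≠ lastVert G B F x b c) :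
    lastVert G B F x b c ∉ bundleTail G B F x K (c + 1) := by
  rintro ⟨b', hb', j, hcj, -, hj⟩
  obtain rfl := hF.eq_of_lastVert_eq hb' hb hj
  exact hF.lastVert_ne_of_succ_ne hb hmove hcj hj

theorem eq_lastVert_of_whiteConn_bundleTail {b : V} (hb : b ∈ B) {c : ℕ} (hc : c < K)
    (hmove : lastVert G B F x b (c + 1) ≠ lastVert G B F x b c) {w : V}
    (hadj : G.Adj (lastVert G B F x b (c + 1)) w) (hwT : w ∉ bundleTail G B F x K (c + 1))
    (hpw : whiteConn G Set.univ (bundleTail G B F x K (c + 1)) (lastVert G B F x b c) w) :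
    w = lastVert G B F x b c := by
  obtain ⟨hpq, hx, hxq⟩ := (lastVert_succ_eq_or b c).resolve_left hmove
  have hq := hF.target_notMem_expand hpq
  by_contra hwp
  have hw : w ∉ expand B F c := fun hw =>
    hwp (hF.eq_of_mem_of_mem (hF.force_of_adj_of_notMem_bundleTail hc hx hw hwT hadj.symm hq hxq)
      hpq).2
  have hreach : ∀ y, whiteConn G Set.univ (bundleTail G B F x K (c + 1)) w y →
      y ∉ expand B F c ∧ whiteConn G Set.univ (expand B F c) x y := by
    intro y hwy
    induction hwy with
    | refl => exact ⟨hw, whiteConn_tail hxq hadj ⟨trivial, hq⟩ ⟨trivial, hw⟩⟩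
    | tail _ hyz ih =>
      obtain ⟨hadj', -, -, hyT, hzT⟩ := hyz
      have hz := hF.notMem_expand_of_adj hc hx hyT ih.1 ih.2 hadj' hzT
      exact ⟨hz, whiteConn_tail ih.2 hadj' ⟨trivial, ih.1⟩ ⟨trivial, hz⟩⟩
  exact (hreach _ (whiteConn_symm hpw)).1 (lastVert_mem_expand hb c)

theorem bundleTail_eq_union {c : ℕ} (hc : c < K) :
    bundleTail G B F x K c = bundleTail G B F x K (c + 1) ∪
      {v | ∃ u, (v, u) ∈ restrictF F (bundle G B F x K) (c + 1)} := by
  ext v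
  constructor
  · rintro ⟨b, hb, j, hcj, hjK, rfl⟩
    rcases hcj.lt_or_eq with hcj | rfl
    · exact Or.inl ⟨b, hb, j, hcj, hjK, rfl⟩
    · rcases lastVert_succ_eq_or b c with h | h
      · exact Or.inl ⟨b, hb, c + 1, le_rfl, hc, h⟩
      · exact Or.inr ⟨_, h.1, ⟨b, hb, c, hjK, rfl⟩, b, hb, c + 1, hc, rfl⟩
  · rintro (⟨b, hb, j, hcj, hjK, rfl⟩ | ⟨u, hvu, -, hu⟩)
    · exact ⟨b, hb, j, by omega, hjK, rfl⟩
    · obtain ⟨b, hb, rfl, -⟩ := hF.exists_lastVert_of_mem_bundle hvu hu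
      exact ⟨b, hb, c, le_rfl, hc.le, rfl⟩

theorem terminus_restrictF_bundle :
    terminus (bundle G B F x K) (restrictF F (bundle G B F x K)) K =
      bundleTail G B F x K K := by
  ext v
  constructor
  · rintro ⟨⟨b, hb, j, hjK, rfl⟩, hterm⟩
    refine ⟨b, hb, K, le_rfl, le_rfl, ?_⟩
    by_contra hne
    obtain ⟨i, hiK, hi, hmove⟩ := exists_lastVert_eq_succ_ne hjK rfl hne
    have hforce := ((lastVert_succ_eq_or b i).resolve_left (hi ▸ hmove)).1
    rw [hi] at hforce
    exact hterm _ ⟨i + 1, by omega, hiK, hforce, ⟨b, hb, j, hjK, rfl⟩, b, hb, i + 1, hiK, rfl⟩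
  · rintro ⟨b, hb, j, hKj, hjK, rfl⟩
    refine ⟨⟨b, hb, j, hjK, rfl⟩, ?_⟩
    rintro u ⟨k, hk, hkK, hforce, -, hu⟩
    obtain ⟨i, rfl⟩ : ∃ i, k = i + 1 := ⟨k - 1, by omega⟩
    obtain ⟨b', hb', hi, rfl⟩ := hF.exists_lastVert_of_mem_bundle hforce hu
    obtain rfl := hF.eq_of_lastVert_eq hb hb' hi.symm
    have hmove : lastVert G B F x b (i + 1) ≠ lastVert G B F x b i := by
      rw [hi]
      exact (hF.adj_of_mem hforce).ne.symm
    exact hF.lastVert_ne_of_succ_ne hb hmove (by omega) hi.symm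

end Bundle

end RelaxedChron

def bundleReversal {V : Type*} (F : ℕ → Set (V × V)) (Q : Set V) (K : ℕ) : ℕ → Set (V × V) :=
  fun t => if t ≤ K then revChron (restrictF F Q) K t else {p ∈ F (t - K) | p.1 ∉ Q ∨ p.2 ∉ Q}

section Reversal

variable {V : Type*} {F : ℕ → Set (V × V)} {Q : Set V} {K : ℕ}

theorem mem_bundleReversal_of_lt {t : ℕ} (ht : t < K) {u v : V} :
    (u, v) ∈ bundleReversal F Q K (t + 1) ↔ (v, u) ∈ restrictF F Q (K - t) := by
  rw [bundleReversal, if_pos (Nat.succ_le_of_lt ht), revChron, if_pos ⟨by omega, ht⟩,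
    show K - (t + 1) + 1 = K - t by omega]
  rfl

theorem mem_bundleReversal_add {r : ℕ} {p : V × V} :
    p ∈ bundleReversal F Q K (K + r + 1) ↔ p ∈ F (r + 1) ∧ (p.1 ∉ Q ∨ p.2 ∉ Q) := by
  rw [bundleReversal, if_neg (by omega), show K + r + 1 - K = r + 1 by omega]
  rfl

theorem forcesOf_bundleReversal (F : ℕ → Set (V × V)) (Q : Set V) (K : ℕ) :
    forcesOf (bundleReversal F Q K) (2 * K) =
      {p : V × V | (p.2, p.1) ∈ forcesOf F K ∧ p.1 ∈ Q ∧ p.2 ∈ Q} ∪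
        {p ∈ forcesOf F K | p.1 ∉ Q ∨ p.2 ∉ Q} := by
  ext ⟨u, v⟩
  constructor
  · rintro ⟨t, ht1, ht2, hp⟩
    rcases le_or_gt t K with htK | htK
    · obtain ⟨s, rfl⟩ : ∃ s, t = s + 1 := ⟨t - 1, by omega⟩
      rw [mem_bundleReversal_of_lt htK] at hp
      exact Or.inl ⟨⟨K - s, by omega, by omega, hp.1⟩, hp.2.2, hp.2.1⟩
    · obtain ⟨r, rfl⟩ : ∃ r, t = K + r + 1 := ⟨t - K - 1, by omega⟩
      rw [mem_bundleReversal_add] at hp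
      exact Or.inr ⟨⟨r + 1, by omega, by omega, hp.1⟩, hp.2⟩
  · rintro (⟨⟨k, hk1, hkK, hp⟩, hu, hv⟩ | ⟨⟨k, hk1, hkK, hp⟩, hQ⟩)
    · refine ⟨K - k + 1, by omega, by omega, ?_⟩
      rw [mem_bundleReversal_of_lt (by omega), show K - (K - k) = k by omega]
      exact ⟨hp, hv, hu⟩
    · refine ⟨K + (k - 1) + 1, by omega, by omega, ?_⟩
      rw [mem_bundleReversal_add, show k - 1 + 1 = k by omega]
      exact ⟨hp, hQ⟩

end Reversal

namespace RelaxedChron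

section Reversal

variable {V : Type*} [Fintype V] {G : SimpleGraph V} {B : Set V} {K : ℕ}
  {F : ℕ → Set (V × V)} {x : V} (hF : RelaxedChron (PSDValid G Set.univ) Set.univ B K F)
include hF

theorem expand_bundleReversal_of_le {t : ℕ} (ht : t ≤ K) :
    expand (bundleTail G B F x K K) (bundleReversal F (bundle G B F x K) K) t =
      bundleTail G B F x K (K - t) := by
  induction t with
  | zero => rfl
  | succ t ih =>
    obtain ⟨c, hc⟩ : ∃ c, K - t = c + 1 := ⟨K - t - 1, by omega⟩
    rw [expand, ih (by omega), show K - (t + 1) = c by omega,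
      hF.bundleTail_eq_union (by omega : c < K), ← hc]
    congr 1
    ext v
    simp only [Set.mem_ofPred_eq, mem_bundleReversal_of_lt (by omega : t < K)]

theorem expand_bundleReversal_add {r : ℕ} (hr : r ≤ K) :
    expand (bundleTail G B F x K K) (bundleReversal F (bundle G B F x K) K) (K + r) =
      bundle G B F x K ∪ expand B F r := by
  induction r with
  | zero =>
    rw [Nat.add_zero, hF.expand_bundleReversal_of_le le_rfl, Nat.sub_self, bundleTail_zero]
    exact (Set.union_eq_left.mpr (subset_bundle K)).symm
  | succ r ih =>
    rw [← Nat.add_assoc, expand, ih (by omega), expand, Set.union_assoc]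
    ext v
    simp only [Set.mem_union, Set.mem_ofPred_eq, mem_bundleReversal_add]
    by_cases hv : v ∈ bundle G B F x K
    · simp only [hv, true_or]
    · simp only [hv, not_false_eq_true, or_true, and_true, false_or]

theorem psdValid_bundleReversal_of_lt {t : ℕ} (ht : t < K) {u v : V}
    (h : (u, v) ∈ bundleReversal F (bundle G B F x K) K (t + 1)) :
    PSDValid G Set.univ
      (expand (bundleTail G B F x K K) (bundleReversal F (bundle G B F x K) K) t) u v := by
  obtain ⟨c, hc⟩ : ∃ c, K - t = c + 1 := ⟨K - t - 1, by omega⟩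
  rw [mem_bundleReversal_of_lt ht, hc] at h
  obtain ⟨hvu, -, hu⟩ := h
  obtain ⟨b, hb, rfl, rfl⟩ := hF.exists_lastVert_of_mem_bundle hvu hu
  have hmove := (hF.adj_of_mem hvu).ne.symm
  rw [hF.expand_bundleReversal_of_le ht.le, hc]
  exact ⟨trivial, trivial, ⟨b, hb, c + 1, le_rfl, by omega, rfl⟩,
    hF.lastVert_notMem_bundleTail hb hmove, (hF.adj_of_mem hvu).symm,
    fun w _ hadj hwT hpw => hF.eq_lastVert_of_whiteConn_bundleTail hb (by omega) hmove hadj hwT hpw⟩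

theorem psdValid_bundleReversal_add {r : ℕ} (hr : r < K) {u v : V}
    (h : (u, v) ∈ bundleReversal F (bundle G B F x K) K (K + r + 1)) :
    PSDValid G Set.univ
      (expand (bundleTail G B F x K K) (bundleReversal F (bundle G B F x K) K) (K + r)) u v := by
  obtain ⟨huv, hQ⟩ := mem_bundleReversal_add.mp h
  have hv : v ∉ bundle G B F x K := fun hv => by
    obtain ⟨b, hb, rfl, rfl⟩ := hF.exists_lastVert_of_mem_bundle huv hv
    exact hQ.elim (· ⟨b, hb, r, hr.le, rfl⟩) (· ⟨b, hb, r + 1, hr, rfl⟩)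
  rw [hF.expand_bundleReversal_add hr.le]
  refine ((hF.psdValid_of_mem huv).of_subset Set.subset_union_right).resolve_left ?_
  rintro (hv' | hv')
  exacts [hv hv', hF.target_notMem_expand huv hv']

theorem eq_of_mem_bundleReversal {t : ℕ} {u₁ u₂ v : V}
    (h₁ : (u₁, v) ∈ bundleReversal F (bundle G B F x K) K t)
    (h₂ : (u₂, v) ∈ bundleReversal F (bundle G B F x K) K t) : u₁ = u₂ := by
  rcases Nat.lt_or_ge K t with hKt | htK
  · obtain ⟨r, rfl⟩ : ∃ r, t = K + r + 1 := ⟨t - K - 1, by omega⟩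
    exact hF.uniqueForcer _ u₁ u₂ v (mem_bundleReversal_add.mp h₁).1
      (mem_bundleReversal_add.mp h₂).1
  · obtain ⟨s, rfl⟩ : ∃ s, t = s + 1 := by
      rcases t with _ | s
      · simp [bundleReversal, revChron] at h₁
      · exact ⟨s, rfl⟩
    obtain ⟨c, hc⟩ : ∃ c, K - s = c + 1 := ⟨K - s - 1, by omega⟩
    rw [mem_bundleReversal_of_lt htK, hc] at h₁ h₂
    obtain ⟨b₁, hb₁, hv₁, rfl⟩ := hF.exists_lastVert_of_mem_bundle h₁.1 h₁.2.2
    obtain ⟨b₂, hb₂, hv₂, rfl⟩ := hF.exists_lastVert_of_mem_bundle h₂.1 h₂.2.2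
    rw [hF.eq_of_lastVert_eq hb₁ hb₂ (hv₁.trans hv₂.symm)]

theorem relaxedChron_bundleReversal :
    RelaxedChron (PSDValid G Set.univ) Set.univ (bundleTail G B F x K K) (2 * K)
      (bundleReversal F (bundle G B F x K) K) where
  subset := Set.subset_univ _
  init := by simp [bundleReversal, revChron]
  bound t ht := by
    rw [bundleReversal, if_neg (by omega), hF.bound (t - K) (by omega)]
    exact Set.sep_empty _
  forcesValid t ht u v h := by
    rcases Nat.lt_or_ge t K with htK | htK
    · exact hF.psdValid_bundleReversal_of_lt htK h
    · obtain ⟨r, rfl⟩ := Nat.exists_eq_add_of_le htK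
      exact hF.psdValid_bundleReversal_add (by omega) h
  uniqueForcer _ _ _ _ := hF.eq_of_mem_bundleReversal
  complete := by
    rw [two_mul, hF.expand_bundleReversal_add le_rfl]
    exact hF.complete.trans Set.subset_union_right

end Reversal

end RelaxedChron

end ZF

theorem bundle_terminus_psd_general {V : Type*} [Fintype V]
    (G : SimpleGraph V) (B : Set V) (K : ℕ) (F : ℕ → Set (V × V))
    (hF : ZF.RelaxedChron (ZF.PSDValid G Set.univ) Set.univ B K F) (x : V) :
    ZF.IsForcingSet (ZF.PSDValid G Set.univ) Set.univ
      (ZF.terminus (ZF.bundle G B F x K) (ZF.restrictF F (ZF.bundle G B F x K)) K) ∧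
    ∃ (K' : ℕ) (F' : ℕ → Set (V × V)),
      ZF.RelaxedChron (ZF.PSDValid G Set.univ) Set.univ
        (ZF.terminus (ZF.bundle G B F x K) (ZF.restrictF F (ZF.bundle G B F x K)) K)
        K' F' ∧
      ZF.forcesOf F' K' =
        {p : V × V | (p.2, p.1) ∈ ZF.forcesOf F K ∧
            p.1 ∈ ZF.bundle G B F x K ∧ p.2 ∈ ZF.bundle G B F x K} ∪
        {p ∈ ZF.forcesOf F K |
            p.1 ∉ ZF.bundle G B F x K ∨ p.2 ∉ ZF.bundle G B F x K} := by
  have hR := hF.relaxedChron_bundleReversal (x := x)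
  rw [hF.terminus_restrictF_bundle]
  exact ⟨hR.isForcingSet fun _ _ h _ _ => ZF.PSDValid.of_subset h, 2 * K, _, hR,
    ZF.forcesOf_bundleReversal F _ K⟩

/-- The terminus of the restriction of a relaxed chronology of PSD forces to the path
bundle induced by a vertex `x` is a PSD forcing set of `G`, and a relaxed chronology of
PSD forces for it is obtained by reversing the forces between vertices of the bundle and
preserving all remaining forces. -/
theorem bundle_terminus_psd {V : Type*} [Fintype V] [DecidableEq V]
    (G : SimpleGraph V) (B : Set V) (K : ℕ) (F : ℕ → Set (V × V))
    (hB : ZF.IsForcingSet (ZF.PSDValid G Set.univ) Set.univ B)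
    (hF : ZF.RelaxedChron (ZF.PSDValid G Set.univ) Set.univ B K F) (x : V) :
    ZF.IsForcingSet (ZF.PSDValid G Set.univ) Set.univ
      (ZF.terminus (ZF.bundle G B F x K) (ZF.restrictF F (ZF.bundle G B F x K)) K) ∧
    ∃ (K' : ℕ) (F' : ℕ → Set (V × V)),
      ZF.RelaxedChron (ZF.PSDValid G Set.univ) Set.univ
        (ZF.terminus (ZF.bundle G B F x K) (ZF.restrictF F (ZF.bundle G B F x K)) K)
        K' F' ∧
      ZF.forcesOf F' K' =
        {p : V × V | (p.2, p.1) ∈ ZF.forcesOf F K ∧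
            p.1 ∈ ZF.bundle G B F x K ∧ p.2 ∈ ZF.bundle G B F x K} ∪
        {p ∈ ZF.forcesOf F K |
            p.1 ∉ ZF.bundle G B F x K ∨ p.2 ∉ ZF.bundle G B F x K} :=
  bundle_terminus_psd_general G B K F hF x
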